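/- arXiv:2105.14187 — 2 statements merged into one kernel-verified Lean document; each statement's English description precedes it below -/
import Mathlib

section
/- Let μ be a probability measure on ℝ, let ε ∈ (0,1), and let integers r ≥ 1 and N ≥ r. If q₁, …, q_N are drawn i.i.d. from μ, then the probability, over the multisample drawn from the product measure μ^N, of the event { μ{ q ∈ ℝ : q > rmax_r{q_i}_{i=1}^N } > ε } is at most B(r−1; N, ε). -/
open MeasureTheory

/-- Binomial cumulative distribution function `B(k; N, ε)`,
with the convention that it is `0` for `k < 0`. -/
noncomputable def binomCdf (k : ℤ) (N : ℕ) (ε : ℝ) : ℝ :=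
  ∑ i ∈ Finset.range (N + 1),
    if (i : ℤ) ≤ k then (N.choose i : ℝ) * ε ^ i * (1 - ε) ^ (N - i) else 0

/-- The `r`-th largest value of the collection `{q i}_{i=1}^N`
(the element at position `r` in decreasing order, counted with multiplicity). -/
noncomputable def rmax {N : ℕ} (r : ℕ) (q : Fin N → ℝ) : ℝ :=
  ((List.ofFn q).insertionSort (· ≤ ·)).getD (N - r) 0

/-!
Let `t` be an upper `ε`-quantile of `μ`, i.e. `μ (t, ∞) ≤ ε ≤ μ [t, ∞)`. If
`μ (rmax_r, ∞) > ε` then `rmax_r < t`, so fewer than `r` samples lie in `[t, ∞)`. The number of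
samples in `[t, ∞)` is binomial with success probability `p = μ [t, ∞) ≥ ε`, and `B(k; N, p)` is
antitone in `p`: for i.i.d. uniform `U_i` on `[0, 1]` and `p ≤ p'`, `#{i | U_i ≤ p'} ≤ k` implies
`#{i | U_i ≤ p} ≤ k`.
-/

open Set

namespace StieltjesFunction

theorem exists_leftLim_le_le (f : StieltjesFunction ℝ) {c : ℝ} (hlow : ∃ x, f x < c)
    (hhigh : ∃ x, c ≤ f x) : ∃ t, Function.leftLim f t ≤ c ∧ c ≤ f t := by
  obtain ⟨x₀, hx₀⟩ := hlow
  set S : Set ℝ := {x | c ≤ f x}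
  have hbdd : BddBelow S := ⟨x₀, fun x hx => le_of_not_ge fun hxx₀ =>
    (hx.trans (f.mono hxx₀)).not_gt hx₀⟩
  refine ⟨sInf S, ?_, ?_⟩
  · rw [f.mono.leftLim_eq_sSup]
    refine csSup_le (nonempty_Iio.image _) ?_
    rintro _ ⟨y, hy, rfl⟩
    exact (not_le.mp fun hyS => (csInf_le hbdd hyS).not_gt hy).le
  · rw [← f.iInf_Ioi_eq]
    refine le_ciInf fun ⟨r, hr⟩ => ?_
    obtain ⟨y, hyS, hyr⟩ := exists_lt_of_csInf_lt hhigh hr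
    exact le_trans hyS (f.mono hyr.le)

end StieltjesFunction

open ProbabilityTheory in
theorem exists_measure_Ioi_le_le_measure_Ici (μ : Measure ℝ) [IsProbabilityMeasure μ]
    {ε : ℝ} (hε : ε ∈ Ioo (0 : ℝ) 1) :
    ∃ t, μ (Ioi t) ≤ ENNReal.ofReal ε ∧ ENNReal.ofReal ε ≤ μ (Ici t) := by
  have hlow : ∃ x, cdf μ x < 1 - ε :=
    ((tendsto_cdf_atBot μ).eventually (gt_mem_nhds (by linarith [hε.2]))).exists
  have hhigh : ∃ x, 1 - ε ≤ cdf μ x :=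
    ((tendsto_cdf_atTop μ).eventually (le_mem_nhds (by linarith [hε.1]))).exists
  obtain ⟨t, hleft, hright⟩ := (cdf μ).exists_leftLim_le_le hlow hhigh
  refine ⟨t, ?_, ?_⟩
  · rw [← measure_cdf μ, (cdf μ).measure_Ioi (tendsto_cdf_atTop μ)]
    exact ENNReal.ofReal_le_ofReal (by linarith)
  · rw [← measure_cdf μ, (cdf μ).measure_Ici (tendsto_cdf_atTop μ)]
    exact ENNReal.ofReal_le_ofReal (by linarith)

section Binomial

variable {ι α : Type*} [Fintype ι] {A : Set α} [DecidablePred (· ∈ A)]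

theorem setOf_filter_mem_eq_pi [DecidableEq ι] (T : Finset ι) :
    {q : ι → α | Finset.univ.filter (fun i => q i ∈ A) = T} =
      Set.pi univ fun i => if i ∈ T then A else Aᶜ := by
  ext q
  simp only [mem_ofPred_eq, Finset.ext_iff, Finset.mem_filter, Finset.mem_univ, true_and,
    Set.mem_pi, Set.mem_univ, forall_const]
  refine forall_congr' fun i => ?_
  by_cases hi : i ∈ T <;> simp [hi]

variable [MeasurableSpace α]

theorem measure_pi_card_filter_mem_le (ν : Measure α) [SigmaFinite ν]
    (hA : MeasurableSet A) (k : ℕ) :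
    Measure.pi (fun _ : ι => ν) {q | (Finset.univ.filter fun i => q i ∈ A).card ≤ k} =
      ∑ m ∈ Finset.range (Fintype.card ι + 1),
        if m ≤ k then (Fintype.card ι).choose m * (ν A ^ m * ν Aᶜ ^ (Fintype.card ι - m))
        else 0 := by
  classical
  set hits : (ι → α) → Finset ι := fun q => Finset.univ.filter fun i => q i ∈ A
  have hfiber (T : Finset ι) :
      hits ⁻¹' {T} = Set.pi univ fun i => if i ∈ T then A else Aᶜ :=
    setOf_filter_mem_eq_pi T
  have hset : {q | (hits q).card ≤ k} =
      hits ⁻¹' ↑(Finset.univ.filter fun T : Finset ι => T.card ≤ k) := by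
    ext q; simp
  rw [hset, ← sum_measure_preimage_singleton _ fun T _ => by
    rw [hfiber]; exact .univ_pi fun i => by split_ifs <;> simp [hA, hA.compl]]
  simp only [hfiber, Measure.pi_pi, Finset.prod_apply_ite, Finset.prod_const,
    Finset.filter_mem_eq_inter, Finset.univ_inter, Finset.filter_notMem_eq_sdiff,
    Finset.card_univ_sdiff]
  rw [Finset.sum_filter, ← Finset.powerset_univ, Finset.sum_powerset_apply_card
    (fun m => if m ≤ k then ν A ^ m * ν Aᶜ ^ (Fintype.card ι - m) else 0)]
  simp only [Finset.card_univ, nsmul_eq_mul, mul_ite, mul_zero]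

theorem measureReal_pi_card_filter_mem_le (ν : Measure α) [IsProbabilityMeasure ν]
    (hA : MeasurableSet A) (k : ℕ) :
    (Measure.pi fun _ : ι => ν).real {q | (Finset.univ.filter fun i => q i ∈ A).card ≤ k} =
      binomCdf k (Fintype.card ι) (ν.real A) := by
  rw [measureReal_def, measure_pi_card_filter_mem_le ν hA,
    ENNReal.toReal_sum fun m _ => by split_ifs <;> finiteness, binomCdf]
  refine Finset.sum_congr rfl fun m _ => ?_
  simp only [Nat.cast_le, apply_ite ENNReal.toReal, ENNReal.toReal_mul, ENNReal.toReal_pow,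
    ENNReal.toReal_natCast, ENNReal.toReal_zero, ← measureReal_def,
    probReal_compl_eq_one_sub hA, mul_assoc]

theorem binomCdf_le_of_le (k N : ℕ) {p p' : ℝ} (hp : 0 ≤ p) (hpp' : p ≤ p') (hp' : p' ≤ 1) :
    binomCdf k N p' ≤ binomCdf k N p := by
  set ν : Measure ℝ := volume.restrict (Icc 0 1)
  have : IsProbabilityMeasure ν := ⟨by simp [ν]⟩
  have hν (c : ℝ) (hc₀ : 0 ≤ c) (hc₁ : c ≤ 1) : ν.real (Iic c) = c := by
    have hIcc : Iic c ∩ Icc 0 1 = Icc 0 c := by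
      ext x
      simp only [mem_inter_iff, mem_Iic, mem_Icc]
      exact ⟨fun h => ⟨h.2.1, h.1⟩, fun h => ⟨h.2, h.1, h.2.trans hc₁⟩⟩
    simp [ν, measureReal_def, Measure.restrict_apply measurableSet_Iic, hIcc, hc₀]
  have hbinom (c : ℝ) (hc₀ : 0 ≤ c) (hc₁ : c ≤ 1) :
      (Measure.pi fun _ : Fin N => ν).real
        {q | (Finset.univ.filter fun i => q i ∈ Iic c).card ≤ k} = binomCdf k N c := by
    rw [measureReal_pi_card_filter_mem_le ν measurableSet_Iic, Fintype.card_fin, hν c hc₀ hc₁]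
  rw [← hbinom p hp (hpp'.trans hp'), ← hbinom p' (hp.trans hpp') hp']
  refine measureReal_mono (fun q hq => le_trans (Finset.card_le_card ?_) hq)
  exact Finset.monotone_filter_right _ fun i _ hi => le_trans hi hpp'

end Binomial

theorem card_filter_rmax_lt_lt {N r : ℕ} (hr : 1 ≤ r) (hrN : r ≤ N) (q : Fin N → ℝ) :
    (Finset.univ.filter fun i => rmax r q < q i).card < r := by
  set l := (List.ofFn q).insertionSort (· ≤ ·)
  have hperm : l.Perm (List.ofFn q) := List.perm_insertionSort _ _
  have hsorted : l.Pairwise (· ≤ ·) := List.pairwise_insertionSort _ _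
  have hlen : l.length = N := by rw [hperm.length_eq, List.length_ofFn]
  have hNr : N - r < l.length := by omega
  have hrmax : rmax r q = l[N - r] := List.getD_eq_getElem l 0 hNr
  have hcard : (Finset.univ.filter fun i => rmax r q < q i).card =
      l.countP fun x => rmax r q < x := by
    rw [hperm.countP_eq, ← Multiset.coe_countP, ← Fin.univ_val_map, Multiset.countP_map,
      Finset.card_def, Finset.filter_val]
  have htake : (l.take (N - r + 1)).countP (fun x => rmax r q < x) = 0 := by
    rw [List.countP_eq_zero]
    intro x hx
    obtain ⟨i, hi, rfl⟩ := List.mem_take_iff_getElem.mp hx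
    rw [hrmax, decide_eq_true_eq, not_lt]
    exact hsorted.rel_get_of_le (a := ⟨i, by omega⟩) (b := ⟨N - r, hNr⟩)
      (Fin.mk_le_mk.mpr (by omega))
  have hdrop : (l.drop (N - r + 1)).countP (fun x => rmax r q < x) < r :=
    List.countP_le_length.trans_lt (by rw [List.length_drop]; omega)
  rw [hcard, ← List.take_append_drop (N - r + 1) l, List.countP_append, htake, zero_add]
  exact hdrop

theorem stmt1 (μ : Measure ℝ) [IsProbabilityMeasure μ]
    (ε : ℝ) (hε : ε ∈ Set.Ioo (0 : ℝ) 1)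
    (r N : ℕ) (hr : 1 ≤ r) (hrN : r ≤ N) :
    (Measure.pi fun _ : Fin N => μ)
        {q : Fin N → ℝ | ENNReal.ofReal ε < μ {x : ℝ | rmax r q < x}} ≤
      ENNReal.ofReal (binomCdf ((r : ℤ) - 1) N ε) := by
  obtain ⟨t, htail, hε_le⟩ := exists_measure_Ioi_le_le_measure_Ici μ hε
  have hsub : {q : Fin N → ℝ | ENNReal.ofReal ε < μ {x : ℝ | rmax r q < x}} ⊆
      {q | (Finset.univ.filter fun i => q i ∈ Ici t).card ≤ r - 1} := by
    intro q hq
    have hlt : rmax r q < t := lt_of_not_ge fun h =>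
      (hq.trans_le ((measure_mono (Ioi_subset_Ioi h)).trans htail)).false
    have hmono : (Finset.univ.filter fun i => q i ∈ Ici t).card ≤
        (Finset.univ.filter fun i => rmax r q < q i).card :=
      Finset.card_le_card (Finset.monotone_filter_right _ fun i _ hi => hlt.trans_le hi)
    exact Nat.le_sub_one_of_lt (hmono.trans_lt (card_filter_rmax_lt_lt hr hrN q))
  have hp : ε ≤ μ.real (Ici t) :=
    (ENNReal.ofReal_le_iff_le_toReal (measure_ne_top _ _)).mp hε_le
  have hk : ((r - 1 : ℕ) : ℤ) = (r : ℤ) - 1 := by omega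
  calc _ ≤ _ := measure_mono hsub
    _ = ENNReal.ofReal (binomCdf (r - 1 : ℕ) N (μ.real (Ici t))) := by
      rw [← ofReal_measureReal, measureReal_pi_card_filter_mem_le μ measurableSet_Ici,
        Fintype.card_fin]
    _ ≤ ENNReal.ofReal (binomCdf ((r : ℤ) - 1) N ε) := by
      rw [← hk]
      exact ENNReal.ofReal_le_ofReal (binomCdf_le_of_le _ _ hε.1.le hp measureReal_le_one)
end

section
/- (Theorem 1) Let μ be a probability measure on ℝ^{n_x} × ℝ and consider a finite family of n_F candidate estimator pairs {(T_j, σ̂_j)}_{j=1}^{n_F}, where each T_j : ℝ^{n_x} → ℝ is measurable and each σ̂_j : ℝ^{n_x} → (0,∞) is measurable and strictly positive. Let ε ∈ (0,1), δ ∈ (0,1), and let integers r ≥ 1 and N ≥ r satisfy B(r−1; N, ε) ≤ δ/n_F. If (x₁,y₁), …, (x_N,y_N) are drawn i.i.d. from μ and γ̄_j = rmax_r{ |y_i − T_j(x_i)| / σ̂_j(x_i) }_{i=1}^N for each j = 1,…,n_F, then with probability no smaller than 1−δ over the multisample drawn from the product measure μ^N, simultaneously for every j ∈ {1,…,n_F}: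 μ{ (x,y) : |y − T_j(x)| > γ̄_j · σ̂_j(x) } ≤ ε. -/
/-!
Fix a candidate and let `ρ(x, y) = |y - T(x)| / σ̂(x)` be its normalised residual, so that the
violation event of the candidate is `{ρ > γ̄}` with `γ̄` the `r`-th largest residual of the sample.
Choose a threshold `t` with `μ{ρ > t} ≤ ε ≤ μ{ρ ≥ t}`. If the violation probability exceeds `ε`,
then `γ̄ < t`, so fewer than `r` sample points fall in `E = {ρ ≥ t}`. The number of sample points
in `E` is binomial with parameter `μ E ≥ ε`, and the binomial distribution function decreases in
its parameter, so this has probability at most `B(r - 1; N, ε) ≤ δ / n_F`. A union bound over the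
`n_F` candidates concludes.
-/

open MeasureTheory

open Finset

section BinomialLaw

variable {ι α : Type*} [Fintype ι] {E F : Set α}

open Classical in
noncomputable def hitSet (E : Set α) (w : ι → α) : Finset ι :=
  univ.filter fun i => w i ∈ E

lemma hitSet_mono (h : E ⊆ F) (w : ι → α) : hitSet E w ⊆ hitSet F w := by
  classical
  intro i
  simp only [hitSet, mem_filter, mem_univ, true_and]
  exact fun hi => h hi

open Classical in
lemma hitSet_preimage_singleton (E : Set α) (s : Finset ι) :
    hitSet E ⁻¹' {s} = Set.univ.pi fun i => if i ∈ s then E else Eᶜ := by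
  ext w
  simp only [hitSet, Set.mem_preimage, Set.mem_singleton_iff, Finset.ext_iff, mem_filter,
    mem_univ, true_and, Set.mem_pi, Set.mem_univ, forall_const]
  refine forall_congr' fun i => ?_
  split_ifs with hi <;> simp [hi]

variable [MeasurableSpace α]

lemma measurableSet_hitSet_preimage_singleton (hE : MeasurableSet E) (s : Finset ι) :
    MeasurableSet (hitSet E ⁻¹' {s}) := by
  classical
  rw [hitSet_preimage_singleton]
  exact .univ_pi fun i => by split_ifs; exacts [hE, hE.compl]

variable (ν : Measure α) [IsProbabilityMeasure ν]

lemma measureReal_pi_hitSet_preimage_singleton (hE : MeasurableSet E) (s : Finset ι) :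
    (Measure.pi fun _ : ι => ν).real (hitSet E ⁻¹' {s})
      = ν.real E ^ #s * (1 - ν.real E) ^ (Fintype.card ι - #s) := by
  classical
  rw [hitSet_preimage_singleton, measureReal_def, Measure.pi_pi, ENNReal.toReal_prod]
  simp only [apply_ite, ← measureReal_def, ← probReal_compl_eq_one_sub hE]
  rw [prod_ite, prod_const, prod_const, ← card_compl]
  simp [filter_not, compl_eq_univ_sdiff]

lemma measureReal_pi_card_hitSet_le (hE : MeasurableSet E) (k : ℕ) :
    (Measure.pi fun _ : ι => ν).real {w | #(hitSet E w) ≤ k}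
      = binomCdf k (Fintype.card ι) (ν.real E) := by
  classical
  have hpre : {w : ι → α | #(hitSet E w) ≤ k}
      = hitSet E ⁻¹' ↑(univ.filter fun s : Finset ι => #s ≤ k) := by
    ext
    simp
  rw [hpre, ← sum_measureReal_preimage_singleton _
    fun s _ => measurableSet_hitSet_preimage_singleton hE s]
  simp only [measureReal_pi_hitSet_preimage_singleton ν hE, sum_filter]
  rw [← powerset_univ, sum_powerset_apply_card (f := fun m =>
    if m ≤ k then ν.real E ^ m * (1 - ν.real E) ^ (Fintype.card ι - m) else 0), binomCdf]
  simp [mul_assoc]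

end BinomialLaw

lemma binomCdf_of_neg {k : ℤ} (hk : k < 0) (N : ℕ) (p : ℝ) : binomCdf k N p = 0 :=
  sum_eq_zero fun i _ => if_neg (by omega)

open unitInterval in
lemma binomCdf_antitoneOn (k : ℤ) (N : ℕ) : AntitoneOn (binomCdf k N) (Set.Icc 0 1) := by
  intro a ha b hb hab
  obtain hk | hk := lt_or_ge k 0
  · simp [binomCdf_of_neg hk]
  lift k to ℕ using hk
  -- Couple the two laws through uniform samples on `[0, 1]`: `u ≤ a` implies `u ≤ b`.
  have law : ∀ p (hp : p ∈ Set.Icc (0 : ℝ) 1), binomCdf k N p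
      = (Measure.pi fun _ : Fin N => (volume : Measure I)).real
          {w | #(hitSet (Set.Iic ⟨p, hp⟩) w) ≤ k} := by
    intro p hp
    rw [measureReal_pi_card_hitSet_le _ measurableSet_Iic, Fintype.card_fin, measureReal_def,
      volume_Iic, ENNReal.toReal_ofReal hp.1]
  rw [law a ha, law b hb]
  have hsub : Set.Iic (⟨a, ha⟩ : I) ⊆ Set.Iic ⟨b, hb⟩ := Set.Iic_subset_Iic.2 hab
  exact measureReal_mono fun w hw => (card_le_card (hitSet_mono hsub w)).trans hw

lemma List.Pairwise.countP_getElem_lt_le {α : Type*} [Preorder α] [DecidableLT α] {L : List α}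
    (hL : L.Pairwise (· ≤ ·)) {j : ℕ} (hj : j < L.length) :
    L.countP (L[j] < ·) ≤ L.length - (j + 1) := by
  have htake : (L.take (j + 1)).countP (L[j] < ·) = 0 := by
    refine List.countP_eq_zero.2 fun x hx => ?_
    obtain ⟨i, hi, rfl⟩ := List.mem_take_iff_getElem.1 hx
    have hle : L[i] ≤ L[j] :=
      hL.rel_get_of_le (a := ⟨i, by omega⟩) (b := ⟨j, hj⟩) (by simp; omega)
    simpa using hle.not_gt
  generalize L[j] = a at htake
  conv_lhs => rw [← L.take_append_drop (j + 1), List.countP_append, htake, zero_add]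
  exact List.countP_le_length.trans_eq (List.length_drop ..)

lemma card_hitSet_Ioi_rmax_lt {N r : ℕ} (hr : 0 < r) (q : Fin N → ℝ) :
    #(hitSet (Set.Ioi (rmax r q)) q) < r := by
  classical
  have hperm := List.perm_insertionSort (· ≤ ·) (List.ofFn q)
  have hsorted := List.pairwise_insertionSort (· ≤ ·) (List.ofFn q)
  have hrmax : rmax r q = ((List.ofFn q).insertionSort (· ≤ ·)).getD (N - r) 0 := rfl
  generalize (List.ofFn q).insertionSort (· ≤ ·) = L at hperm hsorted hrmax
  have hlen : L.length = N := by simp [hperm.length_eq]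
  have hcard : #(hitSet (Set.Ioi (rmax r q)) q) = L.countP (rmax r q < ·) := by
    rw [hperm.countP_eq, ← Multiset.coe_countP, ← Fin.univ_val_map, Multiset.countP_map]
    rfl
  rw [hcard, hrmax]
  by_cases hNr : N - r < L.length
  · rw [List.getD_eq_getElem _ _ hNr]
    exact (hsorted.countP_getElem_lt_le hNr).trans_lt (by omega)
  · simp [List.eq_nil_of_length_eq_zero (by omega : L.length = 0), hr]

section Quantile

open Filter Topology

lemma antitone_preimage_Ioi {α β : Type*} [Preorder β] (f : α → β) :
    Antitone fun t => f ⁻¹' Set.Ioi t :=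
  Set.monotone_preimage.comp_antitone antitone_Ioi

variable {α : Type*} [MeasurableSpace α] {μ : Measure α} {f : α → ℝ} {ε : ENNReal} {a : ℝ}

lemma measure_preimage_Ioi_le_of_forall_gt (h : ∀ t > a, μ (f ⁻¹' Set.Ioi t) ≤ ε) :
    μ (f ⁻¹' Set.Ioi a) ≤ ε := by
  obtain ⟨u, hu_anti, hu_gt, hu_lim⟩ := exists_seq_strictAnti_tendsto a
  have hunion : f ⁻¹' Set.Ioi a = ⋃ n, f ⁻¹' Set.Ioi (u n) := by
    ext x
    refine ⟨fun hx => Set.mem_iUnion.2 (hu_lim.eventually (gt_mem_nhds hx)).exists, ?_⟩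
    rintro ⟨_, ⟨n, rfl⟩, hn⟩
    exact (hu_gt n).trans hn
  have hmono : Monotone fun n => f ⁻¹' Set.Ioi (u n) :=
    fun _ _ hmn => antitone_preimage_Ioi f (hu_anti.antitone hmn)
  rw [hunion, hmono.measure_iUnion]
  exact iSup_le fun n => h _ (hu_gt n)

lemma le_measure_preimage_Ici_of_forall_lt [IsFiniteMeasure μ] (hf : Measurable f)
    (h : ∀ t < a, ε ≤ μ (f ⁻¹' Set.Ioi t)) : ε ≤ μ (f ⁻¹' Set.Ici a) := by
  obtain ⟨v, hv_mono, hv_lt, hv_lim⟩ := exists_seq_strictMono_tendsto a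
  have hinter : f ⁻¹' Set.Ici a = ⋂ n, f ⁻¹' Set.Ioi (v n) := by
    ext x
    refine ⟨fun hx => Set.mem_iInter.2 fun n => (hv_lt n).trans_le hx, fun hx => ?_⟩
    exact le_of_tendsto' hv_lim fun n => le_of_lt (Set.mem_iInter.1 hx n)
  have hanti : Antitone fun n => f ⁻¹' Set.Ioi (v n) :=
    fun _ _ hmn => antitone_preimage_Ioi f (hv_mono.monotone hmn)
  rw [hinter, hanti.measure_iInter (fun n => (hf measurableSet_Ioi).nullMeasurableSet)
    ⟨0, measure_ne_top μ _⟩]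
  exact le_iInf fun n => h _ (hv_lt n)

lemma exists_measure_preimage_Ioi_le_le_measure_preimage_Ici [IsProbabilityMeasure μ]
    (hf : Measurable f) (hε₀ : ε ≠ 0) (hε₁ : ε < 1) :
    ∃ t, μ (f ⁻¹' Set.Ioi t) ≤ ε ∧ ε ≤ μ (f ⁻¹' Set.Ici t) := by
  have hanti := antitone_preimage_Ioi f
  have h_top : Tendsto (fun t => μ (f ⁻¹' Set.Ioi t)) atTop (𝓝 0) := by
    have hempty : ⋂ t, f ⁻¹' Set.Ioi t = ∅ :=
      Set.eq_empty_of_forall_notMem fun x hx => lt_irrefl (f x) (Set.mem_iInter.1 hx (f x))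
    have := tendsto_measure_iInter_atTop (fun t => (hf measurableSet_Ioi).nullMeasurableSet)
      hanti ⟨0, measure_ne_top μ _⟩
    rwa [hempty, measure_empty] at this
  have h_bot : Tendsto (fun t => μ (f ⁻¹' Set.Ioi t)) atBot (𝓝 1) := by
    have huniv : ⋃ t, f ⁻¹' Set.Ioi t = Set.univ :=
      Set.eq_univ_of_forall fun x => Set.mem_iUnion.2 ⟨f x - 1, sub_one_lt (f x)⟩
    have := tendsto_measure_iUnion_atBot (μ := μ) hanti
    rwa [huniv, measure_univ] at this
  set S := {t | μ (f ⁻¹' Set.Ioi t) ≤ ε}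
  obtain ⟨t₀, ht₀⟩ := (h_top.eventually (gt_mem_nhds (pos_iff_ne_zero.2 hε₀))).exists
  obtain ⟨t₁, ht₁⟩ := eventually_atBot.1 (h_bot.eventually (lt_mem_nhds hε₁))
  have hS_ne : S.Nonempty := ⟨t₀, ht₀.le⟩
  have hS_bdd : BddBelow S := ⟨t₁, fun t ht => le_of_not_gt fun h => (ht₁ t h.le).not_ge ht⟩
  refine ⟨sInf S, measure_preimage_Ioi_le_of_forall_gt fun t ht => ?_,
    le_measure_preimage_Ici_of_forall_lt hf fun t ht => ?_⟩
  · obtain ⟨s, hs, hst⟩ := exists_lt_of_csInf_lt hS_ne ht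
    exact (measure_mono (hanti hst.le)).trans hs
  · exact le_of_lt (not_le.1 fun h => ht.not_ge (csInf_le hS_bdd h))

end Quantile

lemma measure_pi_lt_measure_preimage_Ioi_rmax_le_binomCdf {α : Type*} [MeasurableSpace α]
    (μ : Measure α) [IsProbabilityMeasure μ] {f : α → ℝ} (hf : Measurable f) {ε : ℝ}
    (hε : ε ∈ Set.Ioo (0 : ℝ) 1) {r N : ℕ} (hr : 0 < r) :
    (Measure.pi fun _ : Fin N => μ)
        {w | ENNReal.ofReal ε < μ (f ⁻¹' Set.Ioi (rmax r (f ∘ w)))}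
      ≤ ENNReal.ofReal (binomCdf ((r : ℤ) - 1) N ε) := by
  obtain ⟨t, ht_le, ht_ge⟩ := exists_measure_preimage_Ioi_le_le_measure_preimage_Ici (μ := μ) hf
    (ENNReal.ofReal_pos.2 hε.1).ne' (ENNReal.ofReal_lt_one.2 hε.2)
  have hsub : {w : Fin N → α | ENNReal.ofReal ε < μ (f ⁻¹' Set.Ioi (rmax r (f ∘ w)))}
      ⊆ {w | #(hitSet (f ⁻¹' Set.Ici t) w) ≤ r - 1} := by
    intro w hw
    have hlt : rmax r (f ∘ w) < t :=
      lt_of_not_ge fun h => hw.not_ge ((measure_mono (antitone_preimage_Ioi f h)).trans ht_le)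
    have hhit : hitSet (f ⁻¹' Set.Ici t) w ⊆ hitSet (Set.Ioi (rmax r (f ∘ w))) (f ∘ w) :=
      hitSet_mono (fun x hx => hlt.trans_le hx) w
    exact Nat.le_sub_one_of_lt ((card_le_card hhit).trans_lt (card_hitSet_Ioi_rmax_lt hr _))
  have hεE : ε ≤ μ.real (f ⁻¹' Set.Ici t) :=
    (ENNReal.ofReal_le_iff_le_toReal (measure_ne_top μ _)).1 ht_ge
  calc _ ≤ _ := measure_mono hsub
    _ = ENNReal.ofReal (binomCdf ((r - 1 : ℕ) : ℤ) N (μ.real (f ⁻¹' Set.Ici t))) := by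
      rw [← ofReal_measureReal, measureReal_pi_card_hitSet_le μ (hf measurableSet_Ici),
        Fintype.card_fin]
    _ ≤ ENNReal.ofReal (binomCdf ((r : ℤ) - 1) N ε) := by
      rw [Nat.cast_pred hr]
      exact ENNReal.ofReal_le_ofReal (binomCdf_antitoneOn _ _ ⟨hε.1.le, hε.2.le⟩
        ⟨hε.1.le.trans hεE, measureReal_le_one⟩ hεE)

lemma ofReal_one_sub_le_measure_iInter {β ι : Type*} [MeasurableSpace β] [Fintype ι]
    (P : Measure β) [IsProbabilityMeasure P] {s : ι → Set β} {δ : ℝ} (hδ : 0 ≤ δ)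
    (h : ∀ i, P (s i)ᶜ ≤ ENNReal.ofReal (δ / Fintype.card ι)) :
    ENNReal.ofReal (1 - δ) ≤ P (⋂ i, s i) := by
  have hmul_div : (Fintype.card ι : ℝ) * (δ / Fintype.card ι) ≤ δ := by
    rcases eq_or_ne (Fintype.card ι : ℝ) 0 with h0 | h0
    · simp [h0, hδ]
    · rw [mul_div_cancel₀ _ h0]
  have hcompl : P (⋂ i, s i)ᶜ ≤ ENNReal.ofReal δ := calc
    P (⋂ i, s i)ᶜ ≤ ∑ i, P (s i)ᶜ := by
      rw [Set.compl_iInter]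
      exact measure_iUnion_fintype_le P _
    _ ≤ ∑ _i : ι, ENNReal.ofReal (δ / Fintype.card ι) := sum_le_sum fun i _ => h i
    _ ≤ ENNReal.ofReal δ := by
      rw [sum_const, card_univ, nsmul_eq_mul, ← ENNReal.ofReal_natCast,
        ← ENNReal.ofReal_mul (Nat.cast_nonneg _)]
      exact ENNReal.ofReal_le_ofReal hmul_div
  rw [ENNReal.ofReal_sub _ hδ, ENNReal.ofReal_one, tsub_le_iff_right, ← measure_univ (μ := P)]
  exact (measure_univ_le_add_compl _).trans (by gcongr)

theorem stmt9_general (nx nF : ℕ) (μ : Measure ((Fin nx → ℝ) × ℝ)) [IsProbabilityMeasure μ]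
    (T : Fin nF → (Fin nx → ℝ) → ℝ) (hT : ∀ j, Measurable (T j))
    (σhat : Fin nF → (Fin nx → ℝ) → ℝ) (hσm : ∀ j, Measurable (σhat j))
    (hσpos : ∀ j x, 0 < σhat j x)
    (ε δ : ℝ) (hε : ε ∈ Set.Ioo (0 : ℝ) 1) (hδ : δ ∈ Set.Ioo (0 : ℝ) 1)
    (r N : ℕ) (hr : 1 ≤ r)
    (hB : binomCdf ((r : ℤ) - 1) N ε ≤ δ / (nF : ℝ)) :
    ENNReal.ofReal (1 - δ) ≤
      (Measure.pi fun _ : Fin N => μ)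
        {w : Fin N → (Fin nx → ℝ) × ℝ |
          ∀ j : Fin nF,
            μ {p : (Fin nx → ℝ) × ℝ |
                rmax r (fun i => |(w i).2 - T j (w i).1| / σhat j (w i).1) *
                    σhat j p.1 < |p.2 - T j p.1|} ≤
              ENNReal.ofReal ε} := by
  set ρ : Fin nF → (Fin nx → ℝ) × ℝ → ℝ := fun j p => |p.2 - T j p.1| / σhat j p.1
  have hρ : ∀ j, Measurable (ρ j) := fun j =>
    (measurable_snd.sub ((hT j).comp measurable_fst)).abs.div ((hσm j).comp measurable_fst)
  rw [Set.ofPred_forall]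
  refine ofReal_one_sub_le_measure_iInter _ hδ.1.le fun j => ?_
  simp only [Fintype.card_fin, Set.compl_ofPred, not_le]
  refine (le_of_eq ?_).trans ((measure_pi_lt_measure_preimage_Ioi_rmax_le_binomCdf μ (hρ j) hε
    hr).trans (ENNReal.ofReal_le_ofReal hB))
  congr! 5 with w
  ext p
  exact (lt_div_iff₀ (hσpos j p.1)).symm

theorem stmt9 (nx nF : ℕ) (μ : Measure ((Fin nx → ℝ) × ℝ)) [IsProbabilityMeasure μ]
    (T : Fin nF → (Fin nx → ℝ) → ℝ) (hT : ∀ j, Measurable (T j))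
    (σhat : Fin nF → (Fin nx → ℝ) → ℝ) (hσm : ∀ j, Measurable (σhat j))
    (hσpos : ∀ j x, 0 < σhat j x)
    (ε δ : ℝ) (hε : ε ∈ Set.Ioo (0 : ℝ) 1) (hδ : δ ∈ Set.Ioo (0 : ℝ) 1)
    (r N : ℕ) (hr : 1 ≤ r) (hrN : r ≤ N)
    (hB : binomCdf ((r : ℤ) - 1) N ε ≤ δ / (nF : ℝ)) :
    ENNReal.ofReal (1 - δ) ≤
      (Measure.pi fun _ : Fin N => μ)
        {w : Fin N → (Fin nx → ℝ) × ℝ |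
          ∀ j : Fin nF,
            μ {p : (Fin nx → ℝ) × ℝ |
                rmax r (fun i => |(w i).2 - T j (w i).1| / σhat j (w i).1) *
                    σhat j p.1 < |p.2 - T j p.1|} ≤
              ENNReal.ofReal ε} :=
  stmt9_general nx nF μ T hT σhat hσm hσpos ε δ hε hδ r N hr hB
end
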